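/- arXiv:2504.15727 — 2 statements merged into one kernel-verified Lean document; each statement's English description precedes it below -/
import Mathlib

section
/- Let D⁰ be a set with a distinguished element 0, let A ⊆ D⁰ ∖ {0}, and define the operation ⊣ on D⁰ by: x ⊣ y = x if y ∈ A, and x ⊣ y = 0 if y ∉ A. Then ⊣ is associative and right commutative, 0 is a zero of (D⁰,⊣), and a bijection f : D⁰ → D⁰ is an automorphism of (D⁰,⊣) if and only if f(0) = 0 and f(A) = A; hence the automorphism group of LO^{∼0}_{A←D} = (D⁰,⊣) is isomorphic to S_A × S_{D∖A} where D = D⁰ ∖ {0}. -/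
/-- A dimonoid: two associative operations `ld` (⊣) and `rd` (⊢) satisfying
axioms (D1), (D2), (D3). -/
def IsDimonoid {D : Type*} (ld rd : D → D → D) : Prop :=
  (∀ x y z, ld (ld x y) z = ld x (ld y z)) ∧
  (∀ x y z, rd (rd x y) z = rd x (rd y z)) ∧
  (∀ x y z, ld (ld x y) z = ld x (rd y z)) ∧
  (∀ x y z, ld (rd x y) z = rd x (ld y z)) ∧
  (∀ x y z, rd (ld x y) z = rd x (rd y z))

/-- The automorphism group of a magma `(D, op)`, as a subgroup of `Equiv.Perm D`. -/
def semigroupAutGroup {D : Type*} (op : D → D → D) : Subgroup (Equiv.Perm D) where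
  carrier := {f : Equiv.Perm D | ∀ x y, f (op x y) = op (f x) (f y)}
  one_mem' := fun _ _ => rfl
  mul_mem' := by
    intro f g hf hg
    simp only [Set.mem_setOf_eq] at hf hg ⊢
    intro x y
    simp [Equiv.Perm.mul_apply, hg, hf]
  inv_mem' := by
    intro f hf
    simp only [Set.mem_setOf_eq] at hf ⊢
    intro x y
    apply f.injective
    simp [hf]

/-- The automorphism group of a dimonoid `(D, ld, rd)`. -/
def dimonoidAutGroup {D : Type*} (ld rd : D → D → D) : Subgroup (Equiv.Perm D) :=
  semigroupAutGroup ld ⊓ semigroupAutGroup rd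

/-!
Since `z ∉ A`, the element `z` is a right zero and `z ⊣ y = z` for all `y`, so an
automorphism `f` satisfies `f z = f (f⁻¹ z ⊣ z) = z ⊣ f z = z`. The set
`A = {y | y ⊣ y ≠ z}` is defined by the operation, hence preserved by `f`; conversely a
permutation fixing `z` and preserving `A` visibly respects `⊣`. The automorphism group is
therefore the joint stabilizer of `z` and `A` in `S_{D⁰}`, and restricting to `A` and to
`D⁰ ∖ ({z} ∪ A)` identifies it with `S_A × S_{D∖A}`.
-/

open Equiv Equiv.Perm MulAction
open scoped Pointwise

section LeftProjOrZero

variable {α : Type*} {z : α} {A : Set α}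

-- `leftProjOrZero z A x y` is `x ⊣ y` in `LO^{∼0}_{A←D}`.
open scoped Classical in
noncomputable def leftProjOrZero (z : α) (A : Set α) (x y : α) : α :=
  if y ∈ A then x else z

theorem leftProjOrZero_of_mem {y : α} (x : α) (hy : y ∈ A) : leftProjOrZero z A x y = x :=
  if_pos hy

theorem leftProjOrZero_of_notMem {y : α} (x : α) (hy : y ∉ A) : leftProjOrZero z A x y = z :=
  if_neg hy

theorem leftProjOrZero_zero_left (y : α) : leftProjOrZero z A z y = z := by
  unfold leftProjOrZero; split_ifs <;> rfl

theorem leftProjOrZero_zero_right (hz : z ∉ A) (x : α) : leftProjOrZero z A x z = z :=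
  leftProjOrZero_of_notMem x hz

theorem leftProjOrZero_self_ne_iff (hz : z ∉ A) (y : α) :
    leftProjOrZero z A y y ≠ z ↔ y ∈ A := by
  by_cases hy : y ∈ A
  · simp [leftProjOrZero_of_mem y hy, hy, ne_of_mem_of_not_mem hy hz]
  · simp [leftProjOrZero_of_notMem y hy, hy]

theorem leftProjOrZero_assoc (hz : z ∉ A) (x y w : α) :
    leftProjOrZero z A (leftProjOrZero z A x y) w =
      leftProjOrZero z A x (leftProjOrZero z A y w) := by
  by_cases hw : w ∈ A
  · simp only [leftProjOrZero_of_mem _ hw]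
  · simp only [leftProjOrZero_of_notMem _ hw, leftProjOrZero_zero_right hz]

theorem leftProjOrZero_right_comm (s x y : α) :
    leftProjOrZero z A (leftProjOrZero z A s x) y =
      leftProjOrZero z A (leftProjOrZero z A s y) x := by
  unfold leftProjOrZero; split_ifs <;> rfl

theorem map_leftProjOrZero_iff (hz : z ∉ A) (f : Perm α) :
    (∀ x y, f (leftProjOrZero z A x y) = leftProjOrZero z A (f x) (f y)) ↔
      f z = z ∧ ∀ x, f x ∈ A ↔ x ∈ A := by
  constructor
  · intro hf
    have hfz : f z = z := by
      calc f z = f (leftProjOrZero z A (f.symm z) z) := by rw [leftProjOrZero_zero_right hz]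
        _ = z := by rw [hf, Equiv.apply_symm_apply, leftProjOrZero_zero_left]
    refine ⟨hfz, fun x => ?_⟩
    calc f x ∈ A ↔ leftProjOrZero z A (f x) (f x) ≠ z :=
          (leftProjOrZero_self_ne_iff hz _).symm
      _ ↔ f (leftProjOrZero z A x x) ≠ f z := by rw [hf, hfz]
      _ ↔ x ∈ A := by rw [f.injective.ne_iff, leftProjOrZero_self_ne_iff hz]
  · rintro ⟨hfz, hfA⟩ x y
    by_cases hy : y ∈ A
    · rw [leftProjOrZero_of_mem _ hy, leftProjOrZero_of_mem _ ((hfA y).2 hy)]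
    · rw [leftProjOrZero_of_notMem _ hy, leftProjOrZero_of_notMem _ (mt (hfA y).1 hy), hfz]

theorem semigroupAutGroup_leftProjOrZero (hz : z ∉ A) :
    semigroupAutGroup (leftProjOrZero z A) =
      stabilizer (Perm α) z ⊓ stabilizer (Perm α) A := by
  ext f
  exact (map_leftProjOrZero_iff hz f).trans (and_congr Iff.rfl (mem_stabilizer_set (a := f)).symm)

theorem eq_leftProjOrZero {op : α → α → α}
    (h_mem : ∀ x y, y ∈ A → op x y = x) (h_notMem : ∀ x y, y ∉ A → op x y = z) :
    op = leftProjOrZero z A := by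
  ext x y
  by_cases hy : y ∈ A
  · rw [h_mem x y hy, leftProjOrZero_of_mem x hy]
  · rw [h_notMem x y hy, leftProjOrZero_of_notMem x hy]

end LeftProjOrZero

section RestrictPerms

variable {α : Type*} {z : α} {A : Set α}

theorem Equiv.Perm.ofSubtype_mem_stabilizer_of_disjoint {s t : Set α} [DecidablePred (· ∈ s)]
    (hst : _root_.Disjoint s t) (g : Perm s) : ofSubtype g ∈ stabilizer (Perm α) t := by
  refine mem_stabilizer_set.mpr fun x => ?_
  by_cases hx : x ∈ s
  · have hgx : ofSubtype g x ∈ s := (ofSubtype_apply_mem_iff_mem g x).mpr hx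
    simp only [Perm.smul_def, hst.notMem_of_mem_left hgx, hst.notMem_of_mem_left hx]
  · rw [Perm.smul_def, ofSubtype_apply_of_not_mem g hx]

theorem stabilizer_inf_stabilizer_le_stabilizer_compl_singleton_diff :
    stabilizer (Perm α) z ⊓ stabilizer (Perm α) A ≤
      stabilizer (Perm α) (({z} : Set α)ᶜ \ A) := by
  rw [← stabilizer_singleton, ← stabilizer_compl]
  exact stabilizer_inf_stabilizer_le_stabilizer_sdiff

variable (z A) in
noncomputable def restrictPerms :
    ↥(stabilizer (Perm α) z ⊓ stabilizer (Perm α) A) →*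
      Equiv.Perm A × Equiv.Perm ↥(({z} : Set α)ᶜ \ A) :=
  ((toPermHom _ A).comp (Subgroup.inclusion inf_le_right)).prod
    ((toPermHom _ _).comp
      (Subgroup.inclusion stabilizer_inf_stabilizer_le_stabilizer_compl_singleton_diff))

theorem restrictPerms_injective : Function.Injective (restrictPerms z A) := by
  intro f g hfg
  ext x
  by_cases hxA : x ∈ A
  · exact congrArg Subtype.val (Equiv.congr_fun (congrArg Prod.fst hfg) ⟨x, hxA⟩)
  by_cases hxz : x = z
  · subst hxz
    exact (mem_stabilizer_iff.mp f.2.1).trans (mem_stabilizer_iff.mp g.2.1).symm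
  · exact congrArg Subtype.val (Equiv.congr_fun (congrArg Prod.snd hfg) ⟨x, hxz, hxA⟩)

open scoped Classical in
theorem restrictPerms_surjective (hz : z ∉ A) : Function.Surjective (restrictPerms z A) := by
  rintro ⟨g, h⟩
  have hAz : Disjoint A {z} := Set.disjoint_singleton_right.mpr hz
  have hBz : Disjoint (({z} : Set α)ᶜ \ A) {z} := disjoint_compl_left.mono_left Set.sdiff_subset
  have hBA : Disjoint (({z} : Set α)ᶜ \ A) A := Set.disjoint_sdiff_left
  have hmem :
      ofSubtype g * ofSubtype h ∈ stabilizer (Perm α) z ⊓ stabilizer (Perm α) A := by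
    rw [← stabilizer_singleton]
    exact ⟨Subgroup.mul_mem _ (ofSubtype_mem_stabilizer_of_disjoint hAz g)
        (ofSubtype_mem_stabilizer_of_disjoint hBz h),
      Subgroup.mul_mem _ (ofSubtype_mem_stabilizer g)
        (ofSubtype_mem_stabilizer_of_disjoint hBA h)⟩
  refine ⟨⟨_, hmem⟩, Prod.ext (Equiv.ext fun x => ?_) (Equiv.ext fun x => ?_)⟩
  · apply Subtype.ext
    simp [restrictPerms, Perm.smul_def,
      ofSubtype_apply_of_not_mem h (hBA.notMem_of_mem_right x.2)]
  · apply Subtype.ext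
    simp [restrictPerms, Perm.smul_def,
      ofSubtype_apply_of_not_mem g (hBA.notMem_of_mem_left (h x).2)]

end RestrictPerms

/-- For a set `D⁰` with distinguished element `0` and `A ⊆ D⁰ ∖ {0}`, the
semigroup `LO^{∼0}_{A←D}` with `x ⊣ y = x` for `y ∈ A` and `x ⊣ y = 0` for
`y ∉ A` is associative and right commutative, has `0` as a zero; its
automorphisms are exactly the bijections `f` with `f(0) = 0` and `f(A) = A`,
and its automorphism group is isomorphic to `S_A × S_{D∖A}`. -/
theorem LO_tilde0_A_D_semigroup {D0 : Type*} (z : D0) (A : Set D0)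
    (hA : A ⊆ ({z} : Set D0)ᶜ) (ld : D0 → D0 → D0)
    (hld1 : ∀ x y, y ∈ A → ld x y = x)
    (hld2 : ∀ x y, y ∉ A → ld x y = z) :
    (∀ x y zz, ld (ld x y) zz = ld x (ld y zz)) ∧
    (∀ s x y, ld (ld s x) y = ld (ld s y) x) ∧
    (∀ s, ld z s = z ∧ ld s z = z) ∧
    (∀ f : Equiv.Perm D0,
      (∀ x y, f (ld x y) = ld (f x) (f y)) ↔ (f z = z ∧ ⇑f '' A = A)) ∧
    Nonempty (↥(semigroupAutGroup ld) ≃* Equiv.Perm ↥A × Equiv.Perm ↥(({z} : Set D0)ᶜ \ A)) := by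
  have hz : z ∉ A := Set.subset_compl_singleton_iff.mp hA
  obtain rfl : ld = leftProjOrZero z A := eq_leftProjOrZero hld1 hld2
  refine ⟨leftProjOrZero_assoc hz, leftProjOrZero_right_comm,
    fun s => ⟨leftProjOrZero_zero_left s, leftProjOrZero_zero_right hz s⟩,
    fun f => ?_, ⟨?_⟩⟩
  · exact (map_leftProjOrZero_iff hz f).trans
      (and_congr_right' ((mem_stabilizer_set (a := f)).symm.trans mem_stabilizer_iff))
  · exact (MulEquiv.subgroupCongr (semigroupAutGroup_leftProjOrZero hz)).trans
      (MulEquiv.ofBijective _ ⟨restrictPerms_injective, restrictPerms_surjective hz⟩)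
end

section
/- Let D⁰ be a set with a distinguished element 0, set D = D⁰ ∖ {0} with |D| > 1, and let a ∈ D. Define two operations on D⁰ by: x ⊣ y = x if y = a, and x ⊣ y = 0 if y ≠ a; and x ⊢ y = a if x = y = a, and x ⊢ y = 0 otherwise. Then (D⁰,⊣,⊢) is a dimonoid which is nonabelian and noncommutative, has empty halo (no bar-units), and a bijection f : D⁰ → D⁰ is an automorphism of (D⁰,⊣,⊢) if and only if f(0) = 0 and f(a) = a; hence its automorphism group is isomorphic to S_{D∖{a}}. -/
/-
Everything reduces to a case analysis on whether the arguments equal `a`. For the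
automorphisms, `⊣` alone already forces `f a = a`: otherwise `f x = f (x ⊣ a) = f x ⊣ f a = 0` for
all `x`, contradicting injectivity; then `f 0 = f (0 ⊣ 0) = f 0 ⊣ f 0 = 0` since `f 0 ≠ a`.
Conversely every bijection fixing `0` and `a` preserves both operations. So the automorphism group
is the pointwise stabiliser of `{0, a}` in `S_{D⁰}`, i.e. the permutations of the complement.
-/

open MulAction

namespace Equiv.Perm

variable {α : Type*}

theorem range_ofSubtype_compl (s : Set α) [DecidablePred (· ∈ sᶜ)] :
    (ofSubtype : Perm ↥sᶜ →* Perm α).range = fixingSubgroup (Perm α) s := by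
  ext f
  simp only [MonoidHom.mem_range, mem_fixingSubgroup_iff, Equiv.Perm.smul_def]
  constructor
  · rintro ⟨g, rfl⟩ x hx
    exact ofSubtype_apply_of_not_mem g (not_not.mpr hx)
  · intro hf
    have hcompl : ∀ x, f x ∈ sᶜ ↔ x ∈ sᶜ := fun x => by
      refine not_congr ⟨fun hfx => ?_, fun hx => (hf x hx).symm ▸ hx⟩
      rwa [← f.injective (hf _ hfx)]
    exact ⟨f.subtypePerm hcompl,
      ofSubtype_subtypePerm hcompl fun x hfx hx => hfx (hf x hx)⟩

noncomputable def fixingSubgroupEquivPermCompl (s : Set α) :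
    fixingSubgroup (Perm α) s ≃* Perm ↥sᶜ := by
  classical
  exact (MulEquiv.subgroupCongr (range_ofSubtype_compl s)).symm.trans
    (MonoidHom.ofInjective ofSubtype_injective).symm

end Equiv.Perm

namespace NullDimonoid

variable {D : Type*} [DecidableEq D]

/- `ld z a` and `rd z a` are the operations ⊣ and ⊢ of `LO^{∼0}_{{a}←D} ⋈ O^{{a}}_{D⁰}`,
with `z` in the role of `0`. -/
def ld (z a : D) (x y : D) : D := if y = a then x else z

def rd (z a : D) (x y : D) : D := if x = a ∧ y = a then a else z

variable {z a : D}

theorem eq_ld {op : D → D → D} (h₁ : ∀ x, op x a = x) (h₂ : ∀ x y, y ≠ a → op x y = z) :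
    op = ld z a := by
  ext x y
  by_cases hy : y = a
  · simp [ld, hy, h₁]
  · simp [ld, hy, h₂ x y hy]

theorem eq_rd {op : D → D → D} (h₁ : op a a = a) (h₂ : ∀ x y, ¬(x = a ∧ y = a) → op x y = z) :
    op = rd z a := by
  ext x y
  by_cases hxy : x = a ∧ y = a
  · simp [rd, hxy, h₁]
  · simp [rd, hxy, h₂ x y hxy]

theorem isDimonoid (haz : a ≠ z) : IsDimonoid (ld z a) (rd z a) := by
  refine ⟨?_, ?_, ?_, ?_, ?_⟩ <;> intro x y w <;> simp only [ld, rd] <;> split_ifs <;> simp_all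

theorem ld_ne_rd_swap {b : D} (hbz : b ≠ z) (hba : b ≠ a) : ld z a b a ≠ rd z a a b := by
  simpa [ld, rd, hba] using hbz

theorem ld_ne_ld_swap {b : D} (hbz : b ≠ z) (hba : b ≠ a) : ld z a b a ≠ ld z a a b := by
  simpa [ld, hba] using hbz

theorem rd_of_right_ne (x : D) {y : D} (hy : y ≠ a) : rd z a x y = z := by
  simp [rd, hy]

theorem map_ld_iff (haz : a ≠ z) {f : D → D} (hf : f.Injective) :
    (∀ x y, f (ld z a x y) = ld z a (f x) (f y)) ↔ f z = z ∧ f a = a := by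
  constructor
  · intro hmap
    have hfa : f a = a := by
      by_contra hfa
      have hconst : ∀ x, f x = z := fun x => by simpa [ld, hfa] using hmap x a
      exact haz (hf ((hconst a).trans (hconst z).symm))
    have hfz : f z ≠ a := fun h => haz (hf (hfa.trans h.symm))
    exact ⟨by simpa [ld, haz.symm, hfz] using hmap z z, hfa⟩
  · rintro ⟨hfz, hfa⟩ x y
    by_cases hy : y = a
    · simp [ld, hy, hfa]
    · have hfy : f y ≠ a := fun h => hy (hf (h.trans hfa.symm))
      simp [ld, hy, hfz, hfy]

theorem map_rd {f : D → D} (hf : f.Injective) (hfz : f z = z) (hfa : f a = a) (x y : D) :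
    f (rd z a x y) = rd z a (f x) (f y) := by
  have hfix : ∀ x, f x = a ↔ x = a := fun x => hf.eq_iff' hfa
  by_cases hxy : x = a ∧ y = a <;> simp [rd, hxy, hfix, hfz]

theorem map_ld_and_map_rd_iff (haz : a ≠ z) (f : Equiv.Perm D) :
    ((∀ x y, f (ld z a x y) = ld z a (f x) (f y)) ∧
      (∀ x y, f (rd z a x y) = rd z a (f x) (f y))) ↔ f z = z ∧ f a = a := by
  rw [map_ld_iff haz f.injective]
  exact ⟨And.left, fun h => ⟨h, map_rd f.injective h.1 h.2⟩⟩

theorem dimonoidAutGroup_eq (haz : a ≠ z) :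
    dimonoidAutGroup (ld z a) (rd z a) = fixingSubgroup (Equiv.Perm D) {z, a} := by
  ext f
  rw [dimonoidAutGroup, Subgroup.mem_inf, mem_fixingSubgroup_iff]
  simp only [Set.forall_mem_insert, Set.mem_singleton_iff, forall_eq, Equiv.Perm.smul_def]
  exact map_ld_and_map_rd_iff haz f

end NullDimonoid

open NullDimonoid in
/-- The dimonoid `LO^{∼0}_{{a}←D} ⋈ O^{{a}}_{D⁰}` (on `D⁰ = D ∪ {0}` with
`|D| > 1`, `a ∈ D`): with `x ⊣ y = x` if `y = a`, `x ⊣ y = 0` otherwise, and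
`x ⊢ y = a` if `x = y = a`, `x ⊢ y = 0` otherwise, one gets a nonabelian
noncommutative dimonoid with empty halo, whose automorphisms are exactly the
bijections fixing `0` and `a`, so its automorphism group is isomorphic to
`S_{D∖{a}}`. -/
theorem LO_tilde0_a_null_dimonoid {D0 : Type*} (z a : D0) (haz : a ≠ z)
    (hD : ∃ b : D0, b ≠ z ∧ b ≠ a) (ld rd : D0 → D0 → D0)
    (hld1 : ∀ x, ld x a = x)
    (hld2 : ∀ x y, y ≠ a → ld x y = z)
    (hrd1 : rd a a = a)
    (hrd2 : ∀ x y, ¬ (x = a ∧ y = a) → rd x y = z) :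
    IsDimonoid ld rd ∧
    (¬ ∀ x y, ld x y = rd y x) ∧
    (¬ ((∀ x y, ld x y = ld y x) ∧ (∀ x y, rd x y = rd y x))) ∧
    (¬ ∃ e : D0, ∀ d, rd e d = d ∧ ld d e = d) ∧
    (∀ f : Equiv.Perm D0,
      ((∀ x y, f (ld x y) = ld (f x) (f y)) ∧ (∀ x y, f (rd x y) = rd (f x) (f y))) ↔
      (f z = z ∧ f a = a)) ∧
    Nonempty (↥(dimonoidAutGroup ld rd) ≃* Equiv.Perm ↥(({z, a} : Set D0)ᶜ)) := by
  classical
  obtain ⟨b, hbz, hba⟩ := hD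
  obtain rfl := eq_ld hld1 hld2
  obtain rfl := eq_rd hrd1 hrd2
  refine ⟨isDimonoid haz, fun h => ld_ne_rd_swap hbz hba (h b a),
    fun h => ld_ne_ld_swap hbz hba (h.1 b a), ?_, map_ld_and_map_rd_iff haz, ?_⟩
  · rintro ⟨e, he⟩
    exact hbz ((he b).1.symm.trans (rd_of_right_ne e hba))
  · rw [dimonoidAutGroup_eq haz]
    exact ⟨Equiv.Perm.fixingSubgroupEquivPermCompl _⟩
end
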